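/- The determinant of a k×k submatrix of the Hessian of a smooth function admits a divergence form: for smooth u and index sets P, Q ⊂ {1,…,N} of cardinality k and any p ∈ P, det[(∂²u/∂x_p∂x_q)_{p∈P,q∈Q}] = Σ_{q∈Q} ∂/∂x_q { (∂u/∂x_p) · cof[(∂²u/∂x_{p̄}∂x_{q̄})_{p̄∈P,q̄∈Q}]_{pq} }. -/

import Mathlib

open Matrix

variable {k : ℕ} {E : Type*} [NormedAddCommGroup E] [NormedSpace ℝ E]

/-- Determinant as a continuous multilinear map of the rows. -/
noncomputable def detCMM (k : ℕ) :
    ContinuousMultilinearMap ℝ (fun _ : Fin k => (Fin k → ℝ)) ℝ :=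
  MultilinearMap.mkContinuous
    (Matrix.detRowAlternating : (Fin k → ℝ) [⋀^Fin k]→ₗ[ℝ] ℝ).toMultilinearMap
    (k.factorial) (by
      intro m
      have h1 : (Matrix.detRowAlternating (R := ℝ) (n := Fin k)).toMultilinearMap m
          = Matrix.det (Matrix.of m) := rfl
      rw [h1, Matrix.det_apply']
      calc ‖∑ σ : Equiv.Perm (Fin k), (Equiv.Perm.sign σ : ℝ) * ∏ i, Matrix.of m (σ i) i‖
          ≤ ∑ σ : Equiv.Perm (Fin k), ‖(Equiv.Perm.sign σ : ℝ) * ∏ i, Matrix.of m (σ i) i‖ :=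
            norm_sum_le _ _
        _ ≤ ∑ _σ : Equiv.Perm (Fin k), ∏ i, ‖m i‖ := by
            apply Finset.sum_le_sum
            intro σ _
            have hs : ‖(Equiv.Perm.sign σ : ℝ)‖ = 1 := by
              rcases Int.units_eq_one_or (Equiv.Perm.sign σ) with h | h <;> simp [h]
            rw [norm_mul, hs, one_mul]
            calc ‖∏ i, Matrix.of m (σ i) i‖ ≤ ∏ i, ‖m (σ i)‖ := by
                  rw [norm_prod]
                  exact Finset.prod_le_prod (fun i _ => norm_nonneg _)
                    (fun i _ => norm_le_pi_norm (m (σ i)) i)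
              _ = ∏ i, ‖m i‖ := Equiv.prod_comp σ (fun i => ‖m i‖)
        _ = (k.factorial : ℝ) * ∏ i, ‖m i‖ := by
            rw [Finset.sum_const, nsmul_eq_mul]
            congr 1
            simp [Fintype.card_perm])

@[simp] lemma detCMM_apply (m : Fin k → Fin k → ℝ) :
    detCMM k m = Matrix.det (Matrix.of m) := rfl

/-- Derivative of the determinant of a matrix-valued function, rowwise. -/
lemma fderiv_det_apply {A : E → Matrix (Fin k) (Fin k) ℝ}
    {A' : Fin k → E →L[ℝ] (Fin k → ℝ)} {x : E}
    (h : ∀ a, HasFDerivAt (fun y => A y a) (A' a) x) :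
    HasFDerivAt (fun y => (A y).det)
      (∑ a : Fin k, ((detCMM k).toContinuousLinearMap (fun i => A x i) a) ∘L (A' a)) x := by
  have H := HasFDerivAt.multilinear_comp (f := detCMM k) (g := fun a y => A y a)
    (g' := A') h
  convert H using 2 <;> rfl

lemma det_updateRow_eq_sum (M : Matrix (Fin k) (Fin k) ℝ) (a : Fin k) (r : Fin k → ℝ) :
    (M.updateRow a r).det = ∑ c, r c * (M.updateRow a (Pi.single c 1)).det := by
  have hr : r = ∑ c, r c • (Pi.single c 1 : Fin k → ℝ) := by
    ext j; simp [Pi.single_apply]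
  calc (M.updateRow a r).det
      = (Matrix.detRowAlternating (R := ℝ) (n := Fin k)).toMultilinearMap
          (Function.update M a (∑ c, r c • (Pi.single c 1 : Fin k → ℝ))) := by rw [← hr]; rfl
    _ = ∑ c, r c * (M.updateRow a (Pi.single c 1)).det := by
        erw [MultilinearMap.map_update_sum]
        refine Finset.sum_congr rfl fun c _ => ?_
        erw [MultilinearMap.map_update_smul]
        rfl

lemma det_updateRow_updateRow_antisymm (M : Matrix (Fin k) (Fin k) ℝ) {a0 a : Fin k}
    (h : a ≠ a0) (b c : Fin k) :
    ((M.updateRow a0 (Pi.single b 1)).updateRow a (Pi.single c 1)).det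
      = -((M.updateRow a0 (Pi.single c 1)).updateRow a (Pi.single b 1)).det := by
  have key : (M.updateRow a0 (Pi.single b 1)).updateRow a (Pi.single c 1)
      = ((M.updateRow a0 (Pi.single c 1)).updateRow a (Pi.single b 1)).submatrix
          (Equiv.swap a0 a) id := by
    ext i j
    rcases eq_or_ne i a0 with rfl | hi0
    · simp [Matrix.updateRow_apply, h, Equiv.swap_apply_left, (Ne.symm h)]
    · rcases eq_or_ne i a with rfl | hia
      · simp [Matrix.updateRow_apply, h, Equiv.swap_apply_right, hi0, Ne.symm hi0]
      · simp [Matrix.updateRow_apply, hi0, hia, Equiv.swap_apply_of_ne_of_ne hi0 hia]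
  rw [key, Matrix.det_permute, Equiv.Perm.sign_swap (Ne.symm h)]
  push_cast
  ring

lemma sum_symm_antisymm {C F : Fin k → Fin k → ℝ} (hC : ∀ b c, C b c = C c b)
    (hF : ∀ b c, F b c = - F c b) : ∑ b, ∑ c, C b c * F b c = 0 := by
  have key : ∑ b, ∑ c, C b c * F b c = ∑ b, ∑ c, -(C b c * F b c) := by
    conv_lhs => rw [Finset.sum_comm]
    refine Finset.sum_congr rfl fun b _ => Finset.sum_congr rfl fun c _ => ?_
    rw [hC c b, hF c b]
    ring
  simp only [Finset.sum_neg_distrib] at key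
  linarith



variable {N : ℕ}

/-- The Hessian matrix of `f : ℝ^N → ℝ` at `x`. -/
noncomputable def hess (f : EuclideanSpace ℝ (Fin N) → ℝ)
    (x : EuclideanSpace ℝ (Fin N)) : Matrix (Fin N) (Fin N) ℝ :=
  Matrix.of fun i j =>
    iteratedFDeriv ℝ 2 f x ![EuclideanSpace.single i (1 : ℝ), EuclideanSpace.single j (1 : ℝ)]

/-- The `k × k` submatrix `(∂²u/∂x_p∂x_q)_{p ∈ P, q ∈ Q}` of the Hessian of `u`. -/
noncomputable def hessSub (u : EuclideanSpace ℝ (Fin N) → ℝ) {k : ℕ}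
    (P Q : Finset (Fin N)) (hP : P.card = k) (hQ : Q.card = k)
    (x : EuclideanSpace ℝ (Fin N)) : Matrix (Fin k) (Fin k) ℝ :=
  Matrix.of fun a b => hess u x (P.orderIsoOfFin hP a) (Q.orderIsoOfFin hQ b)

/-- The `i`-th partial derivative of `f : ℝ^N → ℝ`. -/
noncomputable def pderiv' (f : EuclideanSpace ℝ (Fin N) → ℝ) (i : Fin N)
    (x : EuclideanSpace ℝ (Fin N)) : ℝ :=
  fderiv ℝ f x (EuclideanSpace.single i (1 : ℝ))

/-- Divergence form of minors of the Hessian: for `u` smooth on an open set `Ω ⊂ ℝ^N`,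
index sets `P, Q ⊆ {1,…,N}` of cardinality `k`, and any fixed `p ∈ P`,
`det[(∂²u/∂x_p∂x_q)_{p∈P,q∈Q}]
  = ∑_{q ∈ Q} ∂/∂x_q { (∂u/∂x_p) · cof[(∂²u/∂x_{p̄}∂x_{q̄})_{p̄∈P,q̄∈Q}]_{pq} }`,
where the `(p,q)` cofactor of a matrix `M` is `adjugate M q p`. -/
theorem hessMinor_div_form {k : ℕ}
    (Ω : Set (EuclideanSpace ℝ (Fin N))) (hΩ : IsOpen Ω)
    (u : EuclideanSpace ℝ (Fin N) → ℝ) (hu : ContDiffOn ℝ (⊤ : ℕ∞) u Ω)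
    (P Q : Finset (Fin N)) (hP : P.card = k) (hQ : Q.card = k)
    (p : Fin N) (hp : p ∈ P) (x : EuclideanSpace ℝ (Fin N)) (hx : x ∈ Ω) :
    (hessSub u P Q hP hQ x).det =
      ∑ q ∈ Q.attach,
        fderiv ℝ (fun y =>
            pderiv' u p y *
              Matrix.adjugate (hessSub u P Q hP hQ y)
                ((Q.orderIsoOfFin hQ).symm ⟨q.1, q.2⟩)
                ((P.orderIsoOfFin hP).symm ⟨p, hp⟩)) x
          (EuclideanSpace.single q.1 (1 : ℝ)) := by
  classical
  set e : Fin N → EuclideanSpace ℝ (Fin N) := fun i => EuclideanSpace.single i 1 with he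
  set f1 := fderiv ℝ u with hf1
  set f2 := fderiv ℝ f1 with hf2
  set f3 := fderiv ℝ f2 with hf3
  -- basic smoothness facts
  have hCA : ∀ y ∈ Ω, ContDiffAt ℝ (⊤ : ℕ∞) u y := fun y hy => hu.contDiffAt (hΩ.mem_nhds hy)
  have hu1 : ∀ y ∈ Ω, ContDiffAt ℝ (⊤ : ℕ∞) f1 y := fun y hy => (hCA y hy).fderiv_right (by simp)
  have hu2 : ∀ y ∈ Ω, ContDiffAt ℝ (⊤ : ℕ∞) f2 y := fun y hy => (hu1 y hy).fderiv_right (by simp)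
  have hd1 : DifferentiableAt ℝ f1 x := (hu1 x hx).differentiableAt (by simp)
  have hd2 : DifferentiableAt ℝ f2 x := (hu2 x hx).differentiableAt (by simp)
  have hev : ∀ y ∈ Ω, ∀ᶠ z in nhds y, HasFDerivAt u (f1 z) z := by
    intro y hy
    filter_upwards [hΩ.mem_nhds hy] with z hz
    exact ((hCA z hz).differentiableAt (by simp)).hasFDerivAt
  have hsymm : ∀ y ∈ Ω, ∀ v w : EuclideanSpace ℝ (Fin N), f2 y v w = f2 y w v := by
    intro y hy v w
    exact second_derivative_symmetric_of_eventually (hev y hy)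
      ((hu1 y hy).differentiableAt (by simp)).hasFDerivAt v w
  -- index maps
  set Pa : Fin k → Fin N := fun a => P.orderIsoOfFin hP a with hPa
  set Qb : Fin k → Fin N := fun b => Q.orderIsoOfFin hQ b with hQb
  set a0 : Fin k := (P.orderIsoOfFin hP).symm ⟨p, hp⟩ with ha0
  have hPa0 : Pa a0 = p := by
    simp only [hPa, ha0, OrderIso.apply_symm_apply]
  -- the matrix A
  set A : EuclideanSpace ℝ (Fin N) → Matrix (Fin k) (Fin k) ℝ :=
    fun y => Matrix.of fun a b => f2 y (e (Pa a)) (e (Qb b)) with hA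
  have hAeq : ∀ y, hessSub u P Q hP hQ y = A y := by
    intro y
    ext a b
    simp only [hessSub, hess, Matrix.of_apply, hA]
    rw [iteratedFDeriv_two_apply]
    simp [he, hf2, hf1, hPa, hQb]
  -- row derivatives of A
  set A' : Fin k → EuclideanSpace ℝ (Fin N) →L[ℝ] (Fin k → ℝ) :=
    fun a => ContinuousLinearMap.pi fun b =>
      ((f3 x).flip (e (Pa a))).flip (e (Qb b)) with hA'
  have hchain : ∀ w1 w2 : EuclideanSpace ℝ (Fin N),
      HasFDerivAt (fun y => f2 y w1 w2) (((f3 x).flip w1).flip w2) x := by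
    intro w1 w2
    have h1 : HasFDerivAt (fun y => f2 y w1) ((f3 x).flip w1) x := by
      have := hd2.hasFDerivAt.clm_apply (hasFDerivAt_const w1 x)
      simpa using this
    have h2 := h1.clm_apply (hasFDerivAt_const w2 x)
    simpa using h2
  have hrowA : ∀ a, HasFDerivAt (fun y => A y a) (A' a) x := by
    intro a
    exact hasFDerivAt_pi.2 fun b => hchain (e (Pa a)) (e (Qb b))
  have hA'app : ∀ a w c, A' a w c = f3 x w (e (Pa a)) (e (Qb c)) := fun _ _ _ => rfl
  -- symmetry of the third derivative in the two `Q` slots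
  have hCsymm : ∀ a b c, f3 x (e (Qb b)) (e (Pa a)) (e (Qb c))
      = f3 x (e (Qb c)) (e (Pa a)) (e (Qb b)) := by
    intro a b c
    set g : EuclideanSpace ℝ (Fin N) → ℝ := fun z => f1 z (e (Pa a)) with hg
    have hgC : ∀ y ∈ Ω, ContDiffAt ℝ (⊤ : ℕ∞) g y := fun y hy =>
      ContDiffAt.comp y
        ((ContinuousLinearMap.apply ℝ ℝ (e (Pa a))).contDiff.contDiffAt) (hu1 y hy)
    have hgder : ∀ y ∈ Ω, HasFDerivAt g ((f2 y).flip (e (Pa a))) y := by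
      intro y hy
      have := (((hu1 y hy).differentiableAt (by simp)).hasFDerivAt).clm_apply
        (hasFDerivAt_const (e (Pa a)) y)
      simpa using this
    have hdg : DifferentiableAt ℝ (fderiv ℝ g) x :=
      ((hgC x hx).fderiv_right (m := (⊤ : ℕ∞)) (by simp)).differentiableAt (by simp)
    have hkey : ∀ bb cc, f3 x (e (Qb bb)) (e (Pa a)) (e (Qb cc))
        = fderiv ℝ (fderiv ℝ g) x (e (Qb bb)) (e (Qb cc)) := by
      intro bb cc
      have hstep : (fun y => f2 y (e (Pa a)) (e (Qb cc))) =ᶠ[nhds x]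
          (fun y => fderiv ℝ g y (e (Qb cc))) := by
        filter_upwards [hΩ.mem_nhds hx] with y hy
        rw [(hgder y hy).fderiv]
        simpa using hsymm y hy (e (Pa a)) (e (Qb cc))
      have h1 : fderiv ℝ (fun y => f2 y (e (Pa a)) (e (Qb cc))) x
          = fderiv ℝ (fun y => fderiv ℝ g y (e (Qb cc))) x := hstep.fderiv_eq
      have h2 : fderiv ℝ (fun y => f2 y (e (Pa a)) (e (Qb cc))) x (e (Qb bb))
          = f3 x (e (Qb bb)) (e (Pa a)) (e (Qb cc)) := by
        rw [(hchain (e (Pa a)) (e (Qb cc))).fderiv]; rfl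
      have h3 : fderiv ℝ (fun y => fderiv ℝ g y (e (Qb cc))) x (e (Qb bb))
          = fderiv ℝ (fderiv ℝ g) x (e (Qb bb)) (e (Qb cc)) := by
        rw [fderiv_clm_apply hdg (differentiableAt_const _)]
        simp
      rw [← h2, h1, h3]
    have hGsymm : ∀ v w, fderiv ℝ (fderiv ℝ g) x v w = fderiv ℝ (fderiv ℝ g) x w v := by
      intro v w
      refine second_derivative_symmetric_of_eventually (f := g) ?_ hdg.hasFDerivAt v w
      filter_upwards [hΩ.mem_nhds hx] with y hy
      exact ((hgC y hy).differentiableAt (by simp)).hasFDerivAt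
    rw [hkey b c, hkey c b]
    exact hGsymm _ _
  -- the first partial derivative and its derivative
  have hvder : HasFDerivAt (pderiv' u p) ((f2 x).flip (e p)) x := by
    have := hd1.hasFDerivAt.clm_apply (hasFDerivAt_const (e p) x)
    simp at this
    exact this
  have hvA : ∀ b, f2 x (e (Qb b)) (e p) = A x a0 b := by
    intro b
    rw [hsymm x hx]
    simp [hA, hPa0]
  -- rows of the modified matrix
  have hBrow : ∀ (b a : Fin k),
      HasFDerivAt (fun y => (A y).updateRow a0 (Pi.single b 1) a)
        (if a = a0 then 0 else A' a) x := by
    intro b a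
    by_cases h : a = a0
    · subst h
      simp only [Matrix.updateRow_self, if_pos rfl]
      exact hasFDerivAt_const _ _
    · simp only [Matrix.updateRow_ne h, if_neg h]
      exact hrowA a
  have hdet_b : ∀ b : Fin k,
      HasFDerivAt (fun y => ((A y).updateRow a0 (Pi.single b 1)).det)
        (∑ a : Fin k,
          ((detCMM k).toContinuousLinearMap
            (fun i => (A x).updateRow a0 (Pi.single b 1) i) a) ∘L
              (if a = a0 then 0 else A' a)) x :=
    fun b => fderiv_det_apply (A := fun y => (A y).updateRow a0 (Pi.single b 1)) (hBrow b)
  have hDapp : ∀ b : Fin k,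
      (∑ a : Fin k,
        ((detCMM k).toContinuousLinearMap
          (fun i => (A x).updateRow a0 (Pi.single b 1) i) a) ∘L
            (if a = a0 then 0 else A' a)) (e (Qb b))
      = ∑ a : Fin k,
          (((A x).updateRow a0 (Pi.single b 1)).updateRow a
            ((if a = a0 then (0 : EuclideanSpace ℝ (Fin N) →L[ℝ] (Fin k → ℝ)) else A' a)
              (e (Qb b)))).det := by
    intro b
    rw [ContinuousLinearMap.sum_apply]
    refine Finset.sum_congr rfl fun a _ => ?_
    rfl
  -- the per-index derivative of the product
  have hmain : ∀ b : Fin k,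
      fderiv ℝ (fun y => pderiv' u p y * Matrix.adjugate (A y) b a0) x (e (Qb b))
        = A x a0 b * Matrix.adjugate (A x) b a0
          + pderiv' u p x * ∑ a : Fin k,
              (((A x).updateRow a0 (Pi.single b 1)).updateRow a
                ((if a = a0 then (0 : EuclideanSpace ℝ (Fin N) →L[ℝ] (Fin k → ℝ)) else A' a)
                  (e (Qb b)))).det := by
    intro b
    have hfun : (fun y => pderiv' u p y * Matrix.adjugate (A y) b a0)
        = fun y => pderiv' u p y * ((A y).updateRow a0 (Pi.single b 1)).det := by
      funext y; rw [Matrix.adjugate_apply]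
    rw [hfun, (show HasFDerivAt (fun y => pderiv' u p y * ((A y).updateRow a0 (Pi.single b 1)).det) _ x from
      hvder.mul (hdet_b b)).fderiv]
    simp only [ContinuousLinearMap.add_apply, ContinuousLinearMap.smul_apply, smul_eq_mul]
    rw [hDapp b]
    have h1 : ((f2 x).flip (e p)) (e (Qb b)) = A x a0 b := hvA b
    have h2 : ((A x).updateRow a0 (Pi.single b 1)).det = Matrix.adjugate (A x) b a0 :=
      (Matrix.adjugate_apply _ _ _).symm
    rw [h1, h2]
    ring
  -- the divergence of the cofactors vanishes
  have hT : ∑ b : Fin k, ∑ a : Fin k,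
      (((A x).updateRow a0 (Pi.single b 1)).updateRow a
        ((if a = a0 then (0 : EuclideanSpace ℝ (Fin N) →L[ℝ] (Fin k → ℝ)) else A' a)
          (e (Qb b)))).det = 0 := by
    rw [Finset.sum_comm]
    refine Finset.sum_eq_zero fun a _ => ?_
    by_cases h : a = a0
    · subst h
      refine Finset.sum_eq_zero fun b _ => ?_
      rw [if_pos rfl]
      refine Matrix.det_eq_zero_of_row_eq_zero a0 fun j => ?_
      simp
    · simp only [if_neg h]
      have hexp : ∀ b : Fin k,
          (((A x).updateRow a0 (Pi.single b 1)).updateRow a (A' a (e (Qb b)))).det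
          = ∑ c, (A' a (e (Qb b)) c) *
              (((A x).updateRow a0 (Pi.single b 1)).updateRow a (Pi.single c 1)).det :=
        fun b => det_updateRow_eq_sum _ _ _
      rw [Finset.sum_congr rfl fun b _ => hexp b]
      exact sum_symm_antisymm
        (C := fun b c => A' a (e (Qb b)) c)
        (F := fun b c =>
          (((A x).updateRow a0 (Pi.single b 1)).updateRow a (Pi.single c 1)).det)
        (fun b c => by exact hCsymm a b c)
        (fun b c => det_updateRow_updateRow_antisymm (A x) h b c)
  -- Laplace expansion along the row `a0`
  have hlap : ∑ b : Fin k, A x a0 b * Matrix.adjugate (A x) b a0 = (A x).det := by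
    have h2 := congrFun (congrFun (Matrix.mul_adjugate (A x)) a0) a0
    simpa [Matrix.mul_apply, Matrix.one_apply] using h2
  -- reindex the sum over `Q.attach`
  simp only [hAeq]
  rw [Finset.attach_eq_univ]
  rw [← Equiv.sum_comp (Q.orderIsoOfFin hQ).toEquiv
      (fun q => fderiv ℝ (fun y => pderiv' u p y *
        Matrix.adjugate (A y) ((Q.orderIsoOfFin hQ).symm ⟨q.1, q.2⟩) a0) x
        (EuclideanSpace.single q.1 1))]
  have hterm : ∀ b : Fin k,
      fderiv ℝ (fun y => pderiv' u p y *
        Matrix.adjugate (A y)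
          ((Q.orderIsoOfFin hQ).symm ⟨((Q.orderIsoOfFin hQ).toEquiv b).1,
            ((Q.orderIsoOfFin hQ).toEquiv b).2⟩) a0) x
        (EuclideanSpace.single ((Q.orderIsoOfFin hQ).toEquiv b).1 1)
      = fderiv ℝ (fun y => pderiv' u p y * Matrix.adjugate (A y) b a0) x (e (Qb b)) := by
    intro b
    have h5 : ((Q.orderIsoOfFin hQ).symm ⟨((Q.orderIsoOfFin hQ).toEquiv b).1,
        ((Q.orderIsoOfFin hQ).toEquiv b).2⟩ : Fin k) = b := OrderIso.symm_apply_apply _ _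
    simp only [h5, he, hQb]
    rfl
  rw [Finset.sum_congr rfl fun b _ => hterm b]
  rw [Finset.sum_congr rfl fun b _ => hmain b]
  rw [Finset.sum_add_distrib, hlap, ← Finset.mul_sum, hT, mul_zero, add_zero]
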